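/- arXiv:2211.15027 — 10 statements merged into one kernel-verified Lean document; each statement's English description precedes it below -/
import Mathlib

section
/- Let P be a poset and D a directed subset of P. If D = D_1 ∪ D_2 ∪ ... ∪ D_n is a finite union of nonempty subsets, then some D_m is cofinal in D, i.e., D ⊆ ↓D_m. -/
lemma finset_upper_bound {P : Type*} [PartialOrder P] {D : Set P} (hne : D.Nonempty)
    (hdir : DirectedOn (· ≤ ·) D) (s : Finset P) (hs : ↑s ⊆ D) :
    ∃ z ∈ D, ∀ x ∈ s, x ≤ z := by
  classical
  induction s using Finset.induction_on with
  | empty => obtain ⟨z, hz⟩ := hne; exact ⟨z, hz, by simp⟩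
  | @insert a t hx ih =>
    have hsub : ↑t ⊆ D := by
      intro y hy; exact hs (by simp [hy])
    obtain ⟨z, hzD, hz⟩ := ih hsub
    have haD : a ∈ D := hs (by simp)
    obtain ⟨w, hwD, haw, hzw⟩ := hdir a haD z hzD
    refine ⟨w, hwD, ?_⟩
    intro y hy
    rcases Finset.mem_insert.mp hy with rfl | hy
    · exact haw
    · exact (hz y hy).trans hzw

/-- If a directed set `D` in a poset is a finite union of nonempty subsets
`D_1, ..., D_n`, then some `D_m` is cofinal in `D`, i.e. `D ⊆ ↓D_m`. -/
theorem stmt1 (P : Type*) [PartialOrder P] (D : Set P) (hne : D.Nonempty)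
    (hdir : DirectedOn (· ≤ ·) D) (n : ℕ) (Di : Fin n → Set P)
    (hDine : ∀ i, (Di i).Nonempty) (hunion : D = ⋃ i, Di i) :
    ∃ m : Fin n, D ⊆ {x : P | ∃ b ∈ Di m, x ≤ b} := by
  classical
  by_contra h
  push_neg at h
  choose x hxD hx using fun m => (Set.not_subset.mp (h m))
  simp only [Set.mem_setOf_eq, not_exists, not_and] at hx
  have hsub : ↑(Finset.image x Finset.univ) ⊆ D := by
    intro y hy
    simp only [Finset.coe_image, Set.mem_image] at hy
    obtain ⟨i, _, rfl⟩ := hy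
    exact hxD i
  obtain ⟨z, hzD, hz⟩ := finset_upper_bound hne hdir _ hsub
  have : z ∈ ⋃ i, Di i := hunion ▸ hzD
  obtain ⟨m, hm⟩ := Set.mem_iUnion.mp this
  exact hx m z hm (hz (x m) (Finset.mem_image_of_mem x (Finset.mem_univ m)))
end

section
/- Let P be a poset and D a countable directed subset of P. Then there exists a countable chain C ⊆ D such that ↓D = ↓C. Consequently, if ⋁D exists then ⋁C exists and ⋁C = ⋁D. -/
/-- For a countable directed subset `D` of a poset there is a countable chain
`C ⊆ D` with `↓C = ↓D`; consequently any supremum of `D` is also a supremum of `C`. -/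
theorem stmt2 (P : Type*) [PartialOrder P] (D : Set P) (hcnt : D.Countable)
    (hne : D.Nonempty) (hdir : DirectedOn (· ≤ ·) D) :
    ∃ C ⊆ D, C.Countable ∧ IsChain (· ≤ ·) C ∧
      ({x : P | ∃ c ∈ C, x ≤ c} = {x : P | ∃ d ∈ D, x ≤ d}) ∧
      ∀ a : P, IsLUB D a → IsLUB C a := by
  obtain ⟨f, hf⟩ := Set.Countable.exists_eq_range hcnt hne
  have hfD : ∀ n, f n ∈ D := fun n => hf ▸ Set.mem_range_self n
  -- build g : ℕ → P, increasing, g n ∈ D, f n ≤ g n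
  have step : ∀ x ∈ D, ∀ n : ℕ, ∃ y ∈ D, x ≤ y ∧ f n ≤ y := by
    intro x hx n
    obtain ⟨y, hy, h1, h2⟩ := hdir x hx (f n) (hfD n)
    exact ⟨y, hy, h1, h2⟩
  choose u hu1 hu2 hu3 using step
  classical
  let g : ℕ → P := fun n => Nat.rec (f 0) (fun n gn => if h : gn ∈ D then u gn h (n+1) else gn) n
  have hgD : ∀ n, g n ∈ D := by
    intro n
    induction n with
    | zero => exact hfD 0
    | succ n ih => simp only [g, dif_pos ih] at *; exact hu1 _ ih (n+1)
  have hgle : ∀ n, g n ≤ g (n+1) := by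
    intro n
    have := hgD n
    simp only [g] at this ⊢
    rw [dif_pos this]
    exact hu2 _ this (n+1)
  have hgf : ∀ n, f n ≤ g n := by
    intro n
    cases n with
    | zero => exact le_refl _
    | succ n =>
      have := hgD n
      simp only [g] at this ⊢
      rw [dif_pos this]
      exact hu3 _ this (n+1)
  have hmono : Monotone g := monotone_nat_of_le_succ hgle
  refine ⟨Set.range g, ?_, Set.countable_range g, ?_, ?_, ?_⟩
  · rintro _ ⟨n, rfl⟩; exact hgD n
  · rintro _ ⟨m, rfl⟩ _ ⟨n, rfl⟩ _
    rcases le_total m n with h | h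
    · exact Or.inl (hmono h)
    · exact Or.inr (hmono h)
  · ext x
    simp only [Set.mem_setOf_eq]
    constructor
    · rintro ⟨c, ⟨n, rfl⟩, hx⟩; exact ⟨g n, hgD n, hx⟩
    · rintro ⟨d, hd, hx⟩
      rw [hf] at hd
      obtain ⟨n, rfl⟩ := hd
      exact ⟨g n, ⟨n, rfl⟩, hx.trans (hgf n)⟩
  · intro a ha
    constructor
    · rintro _ ⟨n, rfl⟩; exact ha.1 (hgD n)
    · intro b hb
      apply ha.2
      intro d hd
      rw [hf] at hd
      obtain ⟨n, rfl⟩ := hd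
      exact (hgf n).trans (hb ⟨n, rfl⟩)
end

section
/- For a T0 space X and a nonempty family {K_i : i ∈ I} of nonempty compact saturated subsets of X ordered by reverse inclusion (the Smyth order), the supremum of the family exists in this poset if and only if ⋂_{i∈I} K_i is a nonempty compact saturated set, and in that case the supremum equals ⋂_{i∈I} K_i. -/
def Saturated {X : Type*} [TopologicalSpace X] (K : Set X) : Prop :=
  K = ⋂₀ {U : Set X | IsOpen U ∧ K ⊆ U}

/-- The poset of nonempty compact saturated subsets of `X` under the Smyth order
(reverse inclusion). -/
def KSat (X : Type*) [TopologicalSpace X] : Type _ :=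
  {K : Set X // K.Nonempty ∧ IsCompact K ∧ Saturated K}

instance (X : Type*) [TopologicalSpace X] : PartialOrder (KSat X) where
  le a b := b.1 ⊆ a.1
  le_refl a := subset_rfl
  le_trans a b c h1 h2 := fun x hx => h1 (h2 hx)
  le_antisymm a b h1 h2 := Subtype.ext (subset_antisymm h2 h1)

section SatAux

variable {X : Type*} [TopologicalSpace X]

/-- The saturation of a set. -/
def satOf (A : Set X) : Set X := ⋂₀ {U : Set X | IsOpen U ∧ A ⊆ U}

lemma subset_satOf (A : Set X) : A ⊆ satOf A :=
  fun x hx => Set.mem_sInter.2 fun _ hU => hU.2 hx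

lemma satOf_subset {A K : Set X} (hK : Saturated K) (h : A ⊆ K) : satOf A ⊆ K := by
  rw [hK]
  exact Set.sInter_subset_sInter fun U hU => ⟨hU.1, h.trans hU.2⟩

lemma satOf_subset_open {A U : Set X} (hU : IsOpen U) (h : A ⊆ U) : satOf A ⊆ U :=
  Set.sInter_subset_of_mem ⟨hU, h⟩

lemma saturated_satOf (A : Set X) : Saturated (satOf A) := by
  apply subset_antisymm
  · exact subset_satOf _
  · exact Set.sInter_subset_sInter fun U hU => ⟨hU.1, Set.sInter_subset_of_mem hU⟩

lemma isCompact_satOf {A : Set X} (hA : IsCompact A) : IsCompact (satOf A) := by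
  rw [isCompact_iff_finite_subcover]
  intro ι U hU hcov
  obtain ⟨t, ht⟩ := hA.elim_finite_subcover U hU ((subset_satOf A).trans hcov)
  exact ⟨t, satOf_subset_open (isOpen_biUnion fun i _ => hU i) ht⟩

end SatAux

/-- For a nonempty family in `K(X)`, the supremum exists iff the intersection is a
nonempty compact saturated set, in which case the supremum is the intersection. -/
theorem stmt4 (X : Type*) [TopologicalSpace X] [T0Space X]
    (ι : Type*) [Nonempty ι] (A : ι → KSat X) :
    ((∃ S : KSat X, IsLUB (Set.range A) S) ↔
      ((⋂ i, (A i).1).Nonempty ∧ IsCompact (⋂ i, (A i).1) ∧ Saturated (⋂ i, (A i).1))) ∧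
    (∀ S : KSat X, IsLUB (Set.range A) S → S.1 = ⋂ i, (A i).1) := by
  have key : ∀ S : KSat X, IsLUB (Set.range A) S → S.1 = ⋂ i, (A i).1 := by
    intro S hS
    have hub : ∀ i, S.1 ⊆ (A i).1 := fun i => hS.1 ⟨i, rfl⟩
    apply subset_antisymm (Set.subset_iInter hub)
    intro x hx
    set T : KSat X := ⟨satOf (S.1 ∪ {x}),
      ⟨x, subset_satOf _ (Or.inr rfl)⟩,
      isCompact_satOf (S.2.2.1.union isCompact_singleton),
      saturated_satOf _⟩ with hT
    have hTub : T ∈ upperBounds (Set.range A) := by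
      rintro _ ⟨i, rfl⟩
      show T.1 ⊆ (A i).1
      exact satOf_subset (A i).2.2.2
        (Set.union_subset (hub i) (Set.singleton_subset_iff.2 (Set.mem_iInter.1 hx i)))
    have hST : T.1 ⊆ S.1 := hS.2 hTub
    exact hST (subset_satOf _ (Or.inr rfl))
  refine ⟨⟨fun ⟨S, hS⟩ => (key S hS) ▸ S.2, fun h => ?_⟩, key⟩
  refine ⟨⟨_, h⟩, ?_, ?_⟩
  · rintro _ ⟨i, rfl⟩
    exact Set.iInter_subset _ i
  · intro T hT
    show T.1 ⊆ ⋂ i, (A i).1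
    exact Set.subset_iInter fun i => hT ⟨i, rfl⟩
end

section
/- Let X be a T0 space in which every irreducible closed set is either the closure of a point or all of X. If every irreducible subset of the Smyth power space P_S(X) has nonempty intersection, then X is sober. -/
/-- The Smyth power space: `K(X)` with the upper Vietoris topology, generated by the
sets `□U = {K | K ⊆ U}` for `U` open. -/
def smythTop (X : Type*) [TopologicalSpace X] : TopologicalSpace (KSat X) :=
  TopologicalSpace.generateFrom
    {s : Set (KSat X) | ∃ U : Set X, IsOpen U ∧ s = {K : KSat X | K.1 ⊆ U}}

/-- If every irreducible closed subset of `X` is a point closure or all of `X`, and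
every irreducible subset of the Smyth power space has nonempty intersection, then
`X` is sober. -/
theorem stmt6 (X : Type*) [TopologicalSpace X] [T0Space X]
    (hirr : ∀ A : Set X, IsIrreducible A → IsClosed A →
      (∃ x : X, A = closure {x}) ∨ A = Set.univ)
    (hint : ∀ 𝒜 : Set (KSat X), @IsIrreducible (KSat X) (smythTop X) 𝒜 →
      (⋂ K ∈ 𝒜, (K : KSat X).1).Nonempty) :
    QuasiSober X := by
  constructor
  intro S hS hScl
  rcases hirr S hS hScl with ⟨x, hx⟩ | hS'
  · exact ⟨x, hx.symm⟩
  · subst hS'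
    letI : TopologicalSpace (KSat X) := smythTop X
    have hmem : ∀ x : X, x ∈ ⋂₀ {U : Set X | IsOpen U ∧ x ∈ U} :=
      fun x U hU => hU.2
    have hsub : ∀ (x : X) (U : Set X), IsOpen U →
        (⋂₀ {V : Set X | IsOpen V ∧ x ∈ V} ⊆ U ↔ x ∈ U) := by
      intro x U hU
      exact ⟨fun h => h (hmem x), fun hx => Set.sInter_subset_of_mem ⟨hU, hx⟩⟩
    have hcpt : ∀ x : X, IsCompact (⋂₀ {U : Set X | IsOpen U ∧ x ∈ U}) := by
      intro x
      apply isCompact_of_finite_subcover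
      intro ι U hU hcov
      obtain ⟨i, hi⟩ := Set.mem_iUnion.mp (hcov (hmem x))
      refine ⟨{i}, fun w hw => ?_⟩
      simp only [Set.mem_iUnion, Finset.mem_singleton]
      exact ⟨i, rfl, (hsub x (U i) (hU i)).mpr hi hw⟩
    have hsatd : ∀ x : X, Saturated (⋂₀ {U : Set X | IsOpen U ∧ x ∈ U}) := by
      intro x
      have heq : {U : Set X | IsOpen U ∧ ⋂₀ {V : Set X | IsOpen V ∧ x ∈ V} ⊆ U}
          = {U : Set X | IsOpen U ∧ x ∈ U} := by
        ext U
        constructor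
        · rintro ⟨h1, h2⟩; exact ⟨h1, (hsub x U h1).mp h2⟩
        · rintro ⟨h1, h2⟩; exact ⟨h1, (hsub x U h1).mpr h2⟩
      unfold Saturated
      rw [heq]
    set f : X → KSat X := fun x =>
      ⟨⋂₀ {U : Set X | IsOpen U ∧ x ∈ U}, ⟨x, hmem x⟩, hcpt x, hsatd x⟩ with hf
    have hcont : Continuous f := by
      refine continuous_generateFrom_iff.mpr ?_
      rintro s ⟨U, hU, rfl⟩
      have : f ⁻¹' {K : KSat X | K.1 ⊆ U} = U := by
        ext x
        exact hsub x U hU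
      rw [this]; exact hU
    have hirr2 : @IsIrreducible (KSat X) (smythTop X) (f '' Set.univ) :=
      hS.image f hcont.continuousOn
    obtain ⟨y, hy⟩ := hint _ hirr2
    refine ⟨y, ?_⟩
    have : ∀ z : X, z ∈ closure ({y} : Set X) := by
      intro z
      rw [mem_closure_iff]
      intro U hU hz
      have hy2 : y ∈ (f z).1 := by
        simp only [Set.mem_iInter] at hy
        exact hy (f z) ⟨z, Set.mem_univ z, rfl⟩
      exact ⟨y, (hsub z U hU).mpr hz hy2, rfl⟩
    exact Set.eq_univ_of_forall this
end

section
/- Let X be a T0 space in which every irreducible closed set is either the closure of a point or all of X. Then X is well-filtered if and only if every filtered family of nonempty compact saturated subsets of X has nonempty intersection. -/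
def WellFiltered (X : Type*) [TopologicalSpace X] : Prop :=
  ∀ 𝒦 : Set (Set X), 𝒦.Nonempty →
    (∀ K ∈ 𝒦, K.Nonempty ∧ IsCompact K ∧ Saturated K) →
    DirectedOn (fun a b => b ⊆ a) 𝒦 →
    ∀ U : Set X, IsOpen U → ⋂₀ 𝒦 ⊆ U → ∃ K ∈ 𝒦, K ⊆ U

/-- If every irreducible closed subset of `X` is a point closure or all of `X`, then
`X` is well-filtered iff every filtered family of nonempty compact saturated sets has
nonempty intersection. -/
theorem stmt7 (X : Type*) [TopologicalSpace X] [T0Space X]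
    (hirr : ∀ A : Set X, IsIrreducible A → IsClosed A →
      (∃ x : X, A = closure {x}) ∨ A = Set.univ) :
    WellFiltered X ↔
      ∀ 𝒦 : Set (Set X), 𝒦.Nonempty →
        (∀ K ∈ 𝒦, K.Nonempty ∧ IsCompact K ∧ Saturated K) →
        DirectedOn (fun a b => b ⊆ a) 𝒦 → (⋂₀ 𝒦).Nonempty := by
  constructor
  · intro hwf 𝒦 hne hK hdir
    by_contra hempty
    rw [Set.not_nonempty_iff_eq_empty] at hempty
    obtain ⟨K, hKmem, hKsub⟩ := hwf 𝒦 hne hK hdir ∅ isOpen_empty (by simp [hempty])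
    exact (hK K hKmem).1.ne_empty (Set.subset_empty_iff.mp hKsub)
  · intro hint 𝒦 hne hK hdir U hU hsub
    by_contra hno
    push_neg at hno
    -- every K meets Uᶜ
    have hmeet : ∀ K ∈ 𝒦, (K ∩ Uᶜ).Nonempty := by
      intro K hKm
      rcases Set.not_subset.mp (hno K hKm) with ⟨x, hxK, hxU⟩
      exact ⟨x, hxK, hxU⟩
    -- the family of closed subsets of Uᶜ meeting all K
    set S : Set (Set X) := {C | IsClosed C ∧ C ⊆ Uᶜ ∧ ∀ K ∈ 𝒦, (K ∩ C).Nonempty} with hS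
    have hUcS : Uᶜ ∈ S := ⟨hU.isClosed_compl, le_refl _, hmeet⟩
    -- a compact set meets the intersection of a chain in S
    have hchain : ∀ c ⊆ S, IsChain (· ⊆ ·) c → c.Nonempty →
        ∃ lb ∈ S, ∀ s ∈ c, lb ⊆ s := by
      intro c hcS hc hcne
      refine ⟨⋂₀ c, ⟨?_, ?_, ?_⟩, fun s hs => Set.sInter_subset_of_mem hs⟩
      · exact isClosed_sInter fun s hs => (hcS hs).1
      · obtain ⟨s, hs⟩ := hcne
        exact (Set.sInter_subset_of_mem hs).trans (hcS hs).2.1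
      · intro K hKm
        by_contra hKe
        rw [Set.not_nonempty_iff_eq_empty] at hKe
        have hcover : K ⊆ ⋃ s : c, (s : Set X)ᶜ := by
          intro x hx
          by_contra hxn
          simp only [Set.mem_iUnion, Set.mem_compl_iff, not_exists, not_not] at hxn
          have : x ∈ K ∩ ⋂₀ c := ⟨hx, fun s hs => hxn ⟨s, hs⟩⟩
          rw [hKe] at this; exact this
        haveI : Nonempty c := hcne.to_subtype
        obtain ⟨s, hsub'⟩ := (hK K hKm).2.1.elim_directed_cover (fun s : c => (s : Set X)ᶜ)
          (fun s => (hcS s.2).1.isOpen_compl) hcover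
          (by
            rintro ⟨s₁, hs₁⟩ ⟨s₂, hs₂⟩
            rcases hc.total hs₁ hs₂ with h | h
            · exact ⟨⟨s₁, hs₁⟩, le_refl _, Set.compl_subset_compl.mpr h⟩
            · exact ⟨⟨s₂, hs₂⟩, Set.compl_subset_compl.mpr h, le_refl _⟩)
        have := (hcS s.2).2.2 K hKm
        rw [Set.nonempty_iff_ne_empty] at this
        apply this
        rw [Set.eq_empty_iff_forall_notMem]
        rintro x ⟨hx1, hx2⟩
        exact hsub' hx1 hx2
    obtain ⟨C₀, hC₀sub, hC₀min⟩ := zorn_superset_nonempty S hchain _ hUcS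
    obtain ⟨hC₀closed, hC₀Uc, hC₀meet⟩ := hC₀min.prop
    -- C₀ is irreducible
    obtain ⟨K₀, hK₀⟩ := hne
    have hC₀ne : C₀.Nonempty := ((hC₀meet K₀ hK₀).mono (Set.inter_subset_right))
    have hirr₀ : IsIrreducible C₀ := by
      refine ⟨hC₀ne, isPreirreducible_iff_isClosed_union_isClosed.mpr ?_⟩
      intro z₁ z₂ hz₁ hz₂ hcov
      by_contra hnot
      push_neg at hnot
      have key : ∀ z : Set X, IsClosed z → ¬ C₀ ⊆ z → ∃ K ∈ 𝒦, K ∩ (z ∩ C₀) = ∅ := by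
        intro z hz hzsub
        by_contra hall
        push_neg at hall
        have hmem : z ∩ C₀ ∈ S := by
          refine ⟨hz.inter hC₀closed, (Set.inter_subset_right).trans hC₀Uc, ?_⟩
          intro K hKm
          rw [Set.nonempty_iff_ne_empty]
          exact (hall K hKm).ne_empty
        have := hC₀min.eq_of_subset hmem (Set.inter_subset_right)
        exact hzsub (by rw [← this]; exact Set.inter_subset_left)
      obtain ⟨K₁, hK₁m, hK₁⟩ := key z₁ hz₁ hnot.1
      obtain ⟨K₂, hK₂m, hK₂⟩ := key z₂ hz₂ hnot.2
      obtain ⟨K₃, hK₃m, h31, h32⟩ := hdir K₁ hK₁m K₂ hK₂m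
      obtain ⟨x, hxK₃, hxC₀⟩ := hC₀meet K₃ hK₃m
      rcases hcov hxC₀ with hx | hx
      · have : x ∈ K₁ ∩ (z₁ ∩ C₀) := ⟨h31 hxK₃, hx, hxC₀⟩
        rw [hK₁] at this; exact this
      · have : x ∈ K₂ ∩ (z₂ ∩ C₀) := ⟨h32 hxK₃, hx, hxC₀⟩
        rw [hK₂] at this; exact this
    rcases hirr C₀ hirr₀ hC₀closed with ⟨x, hx⟩ | hx
    · -- C₀ = closure {x}; then x ∈ every K, so x ∈ ⋂₀ 𝒦 ⊆ U, but x ∈ Uᶜ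
      have hxC₀ : x ∈ C₀ := by rw [hx]; exact subset_closure rfl
      have hxK : ∀ K ∈ 𝒦, x ∈ K := by
        intro K hKm
        obtain ⟨y, hyK, hyC₀⟩ := hC₀meet K hKm
        rw [hx] at hyC₀
        have hsat := (hK K hKm).2.2
        rw [hsat]
        rintro V ⟨hVopen, hVK⟩
        obtain ⟨z, hz1, hz2⟩ := mem_closure_iff.mp hyC₀ V hVopen (hVK hyK)
        rwa [Set.mem_singleton_iff.mp hz2] at hz1
      exact hC₀Uc hxC₀ (hsub fun K hKm => hxK K hKm)
    · -- C₀ = univ ⊆ Uᶜ, so U = ∅, but ⋂₀ 𝒦 is nonempty and ⊆ U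
      obtain ⟨y, hy⟩ := hint 𝒦 ⟨K₀, hK₀⟩ hK hdir
      have : y ∈ U := hsub hy
      have : y ∈ Uᶜ := hC₀Uc (hx ▸ Set.mem_univ y)
      exact this (hsub hy)
end

section
/- Let P be a poset such that the Lawson space (P, λ(P)) is upper semicompact (each ↑x is Lawson compact). Then P has property R: for any family {↑F_i : i ∈ I} of upper sets of finite sets and any Scott open U with ⋂_{i∈I} ↑F_i ⊆ U, there is a finite I_0 ⊆ I with ⋂_{i∈I_0} ↑F_i ⊆ U. -/
/-- A subset `U` of a preordered set is Scott open if it is an upper set and every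
directed set with a supremum in `U` meets `U`. -/
def ScottOpen {P : Type*} [Preorder P] (U : Set P) : Prop :=
  IsUpperSet U ∧ ∀ D : Set P, D.Nonempty → DirectedOn (· ≤ ·) D →
    ∀ a : P, IsLUB D a → a ∈ U → (D ∩ U).Nonempty

/-- The Scott topology. -/
def scottTop (P : Type*) [Preorder P] : TopologicalSpace P :=
  TopologicalSpace.generateFrom {U : Set P | ScottOpen U}

/-- The lower topology, generated by complements of principal upper sets. -/
def omegaTop (P : Type*) [Preorder P] : TopologicalSpace P :=
  TopologicalSpace.generateFrom {s : Set P | ∃ x : P, s = (Set.Ici x)ᶜ}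

/-- The Lawson topology, generated by the Scott topology and the lower topology. -/
def lawsonTop (P : Type*) [Preorder P] : TopologicalSpace P :=
  TopologicalSpace.generateFrom
    ({U : Set P | ScottOpen U} ∪ {s : Set P | ∃ x : P, s = (Set.Ici x)ᶜ})

/-- `↑F`, the upper closure of a finite set `F`. -/
def upF {P : Type*} [Preorder P] (F : Finset P) : Set P := {y : P | ∃ a ∈ F, a ≤ y}

/-- Property R: for any family `{↑F_i : i ∈ I}` of finitely generated upper sets and
any Scott open `U` with `⋂_i ↑F_i ⊆ U`, a finite subintersection is contained in `U`. -/
def PropertyR (P : Type*) [Preorder P] : Prop :=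
  ∀ (ι : Type*) (F : ι → Finset P), (∀ i, (F i).Nonempty) →
    ∀ U : Set P, ScottOpen U → (⋂ i, upF (F i)) ⊆ U →
      ∃ I0 : Finset ι, (⋂ i ∈ I0, upF (F i)) ⊆ U

/-- If the Lawson space of a poset `P` is upper semicompact (each `↑x` is Lawson
compact), then `P` has property R. -/
theorem stmt8 (P : Type*) [PartialOrder P]
    (husc : ∀ x : P, @IsCompact P (lawsonTop P) (Set.Ici x)) :
    PropertyR P := by
  classical
  intro ι F _hF U hU hsub
  letI : TopologicalSpace P := lawsonTop P
  have hUopen : IsOpen U := TopologicalSpace.GenerateOpen.basic _ (Or.inl hU)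
  have hupFeq : ∀ G : Finset P, upF G = ⋃ a ∈ G, Set.Ici a := by
    intro G; ext y; simp [upF]
  have hclosed : ∀ G : Finset P, IsClosed (upF G) := by
    intro G
    rw [← isOpen_compl_iff, hupFeq]
    simp only [Set.compl_iUnion]
    exact isOpen_biInter_finset fun a _ =>
      TopologicalSpace.GenerateOpen.basic _ (Or.inr ⟨a, rfl⟩)
  have hcompact : ∀ G : Finset P, IsCompact (upF G) := by
    intro G
    rw [hupFeq]
    exact G.finite_toSet.isCompact_biUnion fun a _ => husc a
  cases isEmpty_or_nonempty ι with
  | inl h =>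
    refine ⟨∅, ?_⟩
    have huniv : (⋂ i, upF (F i)) = Set.univ := by simp
    simp only [Finset.notMem_empty, Set.iInter_of_empty, Set.iInter_univ]
    intro x _
    exact hsub (huniv ▸ Set.mem_univ x)
  | inr h =>
    obtain ⟨i0⟩ := h
    have hempty : upF (F i0) ∩ ⋂ i, (upF (F i) ∩ Uᶜ) = ∅ := by
      apply Set.eq_empty_iff_forall_notMem.mpr
      rintro x ⟨-, hx⟩
      exact (Set.mem_iInter.mp hx i0).2
        (hsub (Set.mem_iInter.mpr fun i => (Set.mem_iInter.mp hx i).1))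
    obtain ⟨t, ht⟩ := (hcompact (F i0)).elim_finite_subfamily_closed _
      (fun i => (hclosed (F i)).inter hUopen.isClosed_compl) hempty
    refine ⟨insert i0 t, fun x hx => ?_⟩
    by_contra hxU
    have hx' : ∀ i ∈ insert i0 t, x ∈ upF (F i) := Set.mem_iInter₂.mp hx
    have : x ∈ upF (F i0) ∩ ⋂ i ∈ t, (upF (F i) ∩ Uᶜ) :=
      ⟨hx' i0 (Finset.mem_insert_self _ _),
       Set.mem_iInter₂.mpr fun i hi => ⟨hx' i (Finset.mem_insert_of_mem hi), hxU⟩⟩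
    rw [ht] at this
    exact this
end

section
/- Let P be a poset such that for any filtered family {↑F_i : i ∈ I} of upper sets of finite sets and any Scott open U with ⋂_{i∈I} ↑F_i ⊆ U, some ↑F_j ⊆ U. Then P is a dcpo. -/
universe u

/-- If for every filtered family of finitely generated upper sets and every Scott
open `U` containing the intersection some member is contained in `U`, then `P` is a
dcpo. -/
theorem stmt10 (P : Type u) [PartialOrder P]
    (h : ∀ (ι : Type u) (_ : Nonempty ι) (F : ι → Finset P), (∀ i, (F i).Nonempty) →
      (∀ i j : ι, ∃ k : ι, upF (F k) ⊆ upF (F i) ∩ upF (F j)) →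
      ∀ U : Set P, ScottOpen U → (⋂ i, upF (F i)) ⊆ U → ∃ j : ι, upF (F j) ⊆ U) :
    ∀ D : Set P, D.Nonempty → DirectedOn (· ≤ ·) D → ∃ a : P, IsLUB D a := by
  intro D hne hdir
  by_contra hno
  push_neg at hno
  set B : Set P := upperBounds D with hB
  set U : Set P := {x : P | ∃ b ∈ B, ¬ x ≤ b} with hU
  have hupF : ∀ d : P, upF ({d} : Finset P) = Set.Ici d := by
    intro d
    ext y
    simp [upF, Set.mem_Ici]
  -- U is Scott open
  have hScott : ScottOpen U := by
    constructor
    · intro x y hxy hx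
      obtain ⟨b, hb, hnb⟩ := hx
      exact ⟨b, hb, fun hyb => hnb (hxy.trans hyb)⟩
    · intro E hEne hEdir a ha haU
      obtain ⟨b, hb, hnb⟩ := haU
      by_contra hemp
      push_neg at hemp
      have : ∀ e ∈ E, e ≤ b := by
        intro e he
        by_contra hle
        have : e ∈ E ∩ U := ⟨he, ⟨b, hb, hle⟩⟩
        simp [hemp] at this
      exact hnb (ha.2 this)
  -- the family indexed by D
  have := h (↥D) ⟨⟨hne.choose, hne.choose_spec⟩⟩ (fun d => {(d : P)})
    (fun d => Finset.singleton_nonempty _)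
    (by
      intro i j
      obtain ⟨k, hk, hik, hjk⟩ := hdir i i.2 j j.2
      refine ⟨⟨k, hk⟩, ?_⟩
      rw [hupF, hupF, hupF]
      intro x hx
      exact ⟨le_trans hik hx, le_trans hjk hx⟩)
    U hScott
    (by
      intro x hx
      have hxB : x ∈ B := by
        intro d hd
        have := Set.mem_iInter.mp hx ⟨d, hd⟩
        rw [hupF] at this
        exact this
      -- x ∈ B, show x ∈ U : there is b ∈ B with ¬ x ≤ b
      by_contra hxU
      apply hno x
      constructor
      · exact hxB
      · intro b hb
        by_contra hxb
        exact hxU ⟨b, hb, hxb⟩)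
  obtain ⟨j, hj⟩ := this
  have : (j : P) ∈ U := hj (by rw [hupF]; exact le_refl _)
  obtain ⟨b, hb, hnb⟩ := this
  exact hnb (hb j.2)
end

section
/- A T0 space X has property R (for any family of finitely generated upper sets {↑F_i} and any open U with ⋂_i ↑F_i ⊆ U, a finite subintersection is contained in U) if and only if X is Ω*-compact, i.e., every closed subset of X is compact in the lower topology ω(X) generated by complements of sets ↑F for finite F. -/
/-- The specialization order of a topological space: `x ≤ y` iff `x ∈ closure {y}`. -/
def specLe {X : Type*} [TopologicalSpace X] (x y : X) : Prop := x ∈ closure {y}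

/-- `↑F`, the upper closure of a finite set `F` in the specialization order. -/
def upFs {X : Type*} [TopologicalSpace X] (F : Finset X) : Set X :=
  {y : X | ∃ a ∈ F, specLe a y}

/-- The lower topology on a `T0` space, generated by complements of the sets `↑F`
for `F` finite nonempty. -/
def omegaTopX (X : Type*) [TopologicalSpace X] : TopologicalSpace X :=
  TopologicalSpace.generateFrom
    {s : Set X | ∃ F : Finset X, F.Nonempty ∧ s = (upFs F)ᶜ}

universe u

lemma upFs_union {X : Type*} [TopologicalSpace X] [DecidableEq X] (F G : Finset X) :
    upFs (F ∪ G) = upFs F ∪ upFs G := by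
  ext y
  simp only [upFs, Set.mem_setOf_eq, Finset.mem_union, Set.mem_union]
  constructor
  · rintro ⟨a, (h | h), ha⟩
    · exact Or.inl ⟨a, h, ha⟩
    · exact Or.inr ⟨a, h, ha⟩
  · rintro (⟨a, h, ha⟩ | ⟨a, h, ha⟩)
    · exact ⟨a, Or.inl h, ha⟩
    · exact ⟨a, Or.inr h, ha⟩

/-- Basis lemma for the generated lower topology. -/
lemma omega_basis {X : Type*} [TopologicalSpace X] [DecidableEq X] (U : Set X)
    (hU : TopologicalSpace.GenerateOpen
      {s : Set X | ∃ F : Finset X, F.Nonempty ∧ s = (upFs F)ᶜ} U) :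
    ∀ x ∈ U, ∃ B : Set X, x ∈ B ∧ B ⊆ U ∧
      (B = Set.univ ∨ ∃ F : Finset X, F.Nonempty ∧ B = (upFs F)ᶜ) := by
  induction hU with
  | basic s hs =>
      intro x hx
      exact ⟨s, hx, subset_rfl, Or.inr hs⟩
  | univ =>
      intro x _
      exact ⟨Set.univ, trivial, subset_rfl, Or.inl rfl⟩
  | inter s t _ _ ihs iht =>
      rintro x ⟨hxs, hxt⟩
      obtain ⟨B1, hx1, hB1s, h1⟩ := ihs x hxs
      obtain ⟨B2, hx2, hB2t, h2⟩ := iht x hxt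
      rcases h1 with h1 | ⟨F, hF, rfl⟩
      · subst h1
        refine ⟨B2, hx2, ?_, h2⟩
        intro y hy
        exact ⟨hB1s trivial, hB2t hy⟩
      · rcases h2 with h2 | ⟨G, hG, rfl⟩
        · subst h2
          refine ⟨(upFs F)ᶜ, hx1, ?_, Or.inr ⟨F, hF, rfl⟩⟩
          intro y hy
          exact ⟨hB1s hy, hB2t trivial⟩
        · refine ⟨(upFs (F ∪ G))ᶜ, ?_, ?_, Or.inr ⟨F ∪ G, hF.mono Finset.subset_union_left, rfl⟩⟩
          · rw [upFs_union]
            intro h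
            rcases h with h | h
            · exact hx1 h
            · exact hx2 h
          · intro y hy
            rw [upFs_union] at hy
            have hy' : y ∉ upFs F ∪ upFs G := hy
            exact ⟨hB1s fun h => hy' (Or.inl h), hB2t fun h => hy' (Or.inr h)⟩
  | sUnion S _ ih =>
      rintro x hx
      rw [Set.mem_sUnion] at hx
      obtain ⟨s, hsS, hxs⟩ := hx
      obtain ⟨B, hxB, hBs, hB⟩ := ih s hsS x hxs
      exact ⟨B, hxB, hBs.trans (Set.subset_sUnion_of_mem hsS), hB⟩

/-- A T0 space `X` has property R iff it is `Ω*`-compact, i.e. every closed subset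
of `X` is compact in the lower topology `ω(X)`. -/
theorem stmt15 (X : Type u) [TopologicalSpace X] [T0Space X] :
    (∀ (ι : Type u) (F : ι → Finset X), (∀ i, (F i).Nonempty) →
      ∀ U : Set X, IsOpen U → (⋂ i, upFs (F i)) ⊆ U →
        ∃ I0 : Finset ι, (⋂ i ∈ I0, upFs (F i)) ⊆ U) ↔
    (∀ C : Set X, IsClosed C → @IsCompact X (omegaTopX X) C) := by
  classical
  constructor
  · intro hR C hC
    apply @isCompact_of_finite_subcover X (omegaTopX X) C
    intro ι V hV hcover
    -- each point of C lies in some basic set inside some V i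
    by_cases hCne : C.Nonempty
    · -- choose for each x ∈ C an index and a basic set
      have hchoice : ∀ x : C, ∃ B : Set X, (x : X) ∈ B ∧ (∃ i, B ⊆ V i) ∧
          (B = Set.univ ∨ ∃ F : Finset X, F.Nonempty ∧ B = (upFs F)ᶜ) := by
        rintro ⟨x, hx⟩
        obtain ⟨i, hi⟩ := Set.mem_iUnion.mp (hcover hx)
        obtain ⟨B, hxB, hBV, hB⟩ := omega_basis (V i) (hV i) x hi
        exact ⟨B, hxB, ⟨i, hBV⟩, hB⟩
      choose B hxB hBV hB using hchoice
      by_cases huniv : ∃ x : C, B x = Set.univ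
      · obtain ⟨x, hx⟩ := huniv
        obtain ⟨i, hi⟩ := hBV x
        refine ⟨{i}, ?_⟩
        intro y hy
        simp only [Finset.mem_singleton, Set.mem_iUnion]
        exact ⟨i, rfl, hi (hx ▸ (trivial : y ∈ Set.univ))⟩
      · push_neg at huniv
        have hF : ∀ x : C, ∃ F : Finset X, F.Nonempty ∧ B x = (upFs F)ᶜ := by
          intro x
          rcases hB x with h | h
          · exact absurd h (huniv x)
          · exact h
        choose G hGne hGB using hF
        have hsub : (⋂ x : C, upFs (G x)) ⊆ Cᶜ := by
          intro y hy
          intro hyC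
          have := hxB ⟨y, hyC⟩
          rw [hGB ⟨y, hyC⟩] at this
          exact this (Set.mem_iInter.mp hy ⟨y, hyC⟩)
        obtain ⟨I0, hI0⟩ := hR C G hGne Cᶜ hC.isOpen_compl hsub
        choose idx hidx using hBV
        refine ⟨I0.image idx, ?_⟩
        intro y hy
        have : y ∉ ⋂ x ∈ I0, upFs (G x) := fun h => hI0 h hy
        simp only [Set.mem_iInter, not_forall] at this
        obtain ⟨x, hxI0, hyx⟩ := this
        refine Set.mem_iUnion.mpr ⟨idx x, ?_⟩
        refine Set.mem_iUnion.mpr ⟨Finset.mem_image_of_mem idx hxI0, ?_⟩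
        apply hidx x
        rw [hGB x]
        exact hyx
    · refine ⟨∅, ?_⟩
      intro y hy
      exact absurd ⟨y, hy⟩ hCne
  · intro hcomp ι F hFne U hU hsub
    have hC : IsClosed Uᶜ := hU.isClosed_compl
    have hcov : Uᶜ ⊆ ⋃ i, (upFs (F i))ᶜ := by
      intro x hx
      by_contra h
      simp only [Set.mem_iUnion, not_exists, Set.mem_compl_iff, not_not] at h
      exact hx (hsub (Set.mem_iInter.mpr h))
    have hopen : ∀ i, @IsOpen X (omegaTopX X) (upFs (F i))ᶜ := fun i =>
      TopologicalSpace.GenerateOpen.basic _ ⟨F i, hFne i, rfl⟩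
    obtain ⟨I0, hI0⟩ := @IsCompact.elim_finite_subcover X (omegaTopX X) Uᶜ ι (hcomp Uᶜ hC)
      (fun i => (upFs (F i))ᶜ) hopen hcov
    refine ⟨I0, ?_⟩
    intro y hy
    by_contra hyU
    obtain ⟨i, hi⟩ := Set.mem_iUnion.mp (hI0 hyU)
    simp only [Set.mem_iUnion] at hi
    obtain ⟨hiI0, hyi⟩ := hi
    exact hyi (Set.mem_iInter.mp (Set.mem_iInter.mp hy i) hiI0)
end

section
/- Let P be a dcpo whose Scott space is well-filtered and coherent. Then P has property R. -/
/-- A subset of a topological space is saturated if it equals the intersection of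
all open sets containing it. -/
def SaturatedIn {X : Type*} (t : TopologicalSpace X) (K : Set X) : Prop :=
  K = ⋂₀ {U : Set X | t.IsOpen U ∧ K ⊆ U}

section Helpers
variable {P : Type*} [Preorder P]

lemma isOpen_scottTop_iff (U : Set P) : (scottTop P).IsOpen U ↔ ScottOpen U := by
  constructor
  · intro h
    induction h with
    | basic V hV => exact hV
    | univ => exact ⟨isUpperSet_univ, fun D hD _ a _ _ => ⟨hD.choose, hD.choose_spec, trivial⟩⟩
    | inter V W hV hW ihV ihW =>
        refine ⟨ihV.1.inter ihW.1, fun D hD hdir a ha haVW => ?_⟩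
        obtain ⟨d1, hd1D, hd1V⟩ := ihV.2 D hD hdir a ha haVW.1
        obtain ⟨d2, hd2D, hd2W⟩ := ihW.2 D hD hdir a ha haVW.2
        obtain ⟨d, hdD, hd1, hd2⟩ := hdir d1 hd1D d2 hd2D
        exact ⟨d, hdD, ihV.1 hd1 hd1V, ihW.1 hd2 hd2W⟩
    | sUnion S hS ih =>
        refine ⟨isUpperSet_sUnion (fun V hV => (ih V hV).1), fun D hD hdir a ha haU => ?_⟩
        obtain ⟨V, hVS, haV⟩ := haU
        obtain ⟨d, hdD, hdV⟩ := (ih V hVS).2 D hD hdir a ha haV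
        exact ⟨d, hdD, V, hVS, hdV⟩
  · intro h; exact TopologicalSpace.GenerateOpen.basic U h

lemma saturated_of_upper {K : Set P} (hK : IsUpperSet K) : SaturatedIn (scottTop P) K := by
  apply Set.Subset.antisymm
  · intro k hk
    exact fun U hU => hU.2 hk
  · intro y hy
    by_contra hyK
    have hV : ScottOpen {z : P | ¬ z ≤ y} := by
      refine ⟨fun a b hab ha hb => ha (hab.trans hb), fun D hD hdir a ha haV => ?_⟩
      by_contra hno
      exact haV (ha.2 (fun d hd => by
        by_contra hdy
        exact hno ⟨d, hd, hdy⟩))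
    exact (hy _ ⟨(isOpen_scottTop_iff _).2 hV, fun k hk hky => hyK (hK hky hk)⟩) le_rfl

lemma upper_upF (F : Finset P) : IsUpperSet (upF F) :=
  fun a b hab ⟨c, hcF, hca⟩ => ⟨c, hcF, hca.trans hab⟩

lemma compact_Ici (x : P) : @IsCompact P (scottTop P) (Set.Ici x) := by
  letI := scottTop P
  apply isCompact_of_finite_subcover
  intro ι U hU hcov
  obtain ⟨i, hi⟩ := Set.mem_iUnion.1 (hcov (Set.mem_Ici.2 le_rfl))
  refine ⟨{i}, fun y hy => ?_⟩
  exact Set.mem_iUnion₂.2 ⟨i, Finset.mem_singleton_self i,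
    ((isOpen_scottTop_iff _).1 (hU i)).1 hy hi⟩

lemma compact_upF (F : Finset P) : @IsCompact P (scottTop P) (upF F) := by
  letI := scottTop P
  have : upF F = ⋃ a ∈ (F : Set P), Set.Ici a := by
    ext y; simp [upF, Set.mem_Ici]
  rw [this]
  exact F.finite_toSet.isCompact_biUnion (fun a _ => compact_Ici a)

end Helpers

/-- If `P` is a dcpo whose Scott space is well-filtered and coherent, then `P` has
property R. -/
theorem stmt16 (P : Type*) [PartialOrder P]
    (hdcpo : ∀ D : Set P, D.Nonempty → DirectedOn (· ≤ ·) D → ∃ a : P, IsLUB D a)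
    (hwf : ∀ 𝒦 : Set (Set P), 𝒦.Nonempty →
      (∀ K ∈ 𝒦, K.Nonempty ∧ @IsCompact P (scottTop P) K ∧ SaturatedIn (scottTop P) K) →
      DirectedOn (fun a b => b ⊆ a) 𝒦 →
      ∀ U : Set P, ScottOpen U → ⋂₀ 𝒦 ⊆ U → ∃ K ∈ 𝒦, K ⊆ U)
    (hcoh : ∀ K1 K2 : Set P,
      @IsCompact P (scottTop P) K1 → SaturatedIn (scottTop P) K1 →
      @IsCompact P (scottTop P) K2 → SaturatedIn (scottTop P) K2 →
      @IsCompact P (scottTop P) (K1 ∩ K2)) :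
    PropertyR P := by
  intro ι F hF U hU hsub
  classical
  rcases isEmpty_or_nonempty ι with hι | hι
  · refine ⟨∅, fun x _ => hsub ?_⟩
    simp [Set.mem_iInter]
  -- upper-ness of finite intersections
  have hupper : ∀ I0 : Finset ι, IsUpperSet (⋂ i ∈ I0, upF (F i)) := by
    intro I0 a b hab ha
    simp only [Set.mem_iInter] at ha ⊢
    exact fun i hi => upper_upF (F i) hab (ha i hi)
  -- compactness of nonempty finite intersections
  have hcomp : ∀ I0 : Finset ι, I0.Nonempty →
      @IsCompact P (scottTop P) (⋂ i ∈ I0, upF (F i)) := by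
    intro I0 hI0
    induction hI0 using Finset.Nonempty.cons_induction with
    | singleton a => simpa using compact_upF (F a)
    | cons a s ha hs ih =>
        have heq : (⋂ i ∈ Finset.cons a s ha, upF (F i)) =
            upF (F a) ∩ ⋂ i ∈ s, upF (F i) := by
          simp [Finset.set_biInter_insert, Finset.cons_eq_insert]
        rw [heq]
        exact hcoh _ _ (compact_upF (F a)) (saturated_of_upper (upper_upF (F a)))
          ih (saturated_of_upper (hupper s))
  -- case split on emptiness of some finite intersection
  by_cases hemp : ∃ I0 : Finset ι, I0.Nonempty ∧ (⋂ i ∈ I0, upF (F i)) = ∅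
  · obtain ⟨I0, _, hI0⟩ := hemp
    exact ⟨I0, by rw [hI0]; exact Set.empty_subset U⟩
  push_neg at hemp
  set 𝒦 : Set (Set P) :=
    {S | ∃ I0 : Finset ι, I0.Nonempty ∧ S = ⋂ i ∈ I0, upF (F i)} with h𝒦
  obtain ⟨i0⟩ := hι
  have hne : 𝒦.Nonempty := ⟨_, {i0}, Finset.singleton_nonempty i0, rfl⟩
  have hmem : ∀ K ∈ 𝒦, K.Nonempty ∧ @IsCompact P (scottTop P) K ∧
      SaturatedIn (scottTop P) K := by
    rintro K ⟨I0, hI0, rfl⟩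
    exact ⟨hemp I0 hI0, hcomp I0 hI0,
      saturated_of_upper (hupper I0)⟩
  have hdir : DirectedOn (fun a b => b ⊆ a) 𝒦 := by
    rintro _ ⟨I0, hI0, rfl⟩ _ ⟨I1, hI1, rfl⟩
    refine ⟨⋂ i ∈ I0 ∪ I1, upF (F i), ⟨I0 ∪ I1, hI0.mono Finset.subset_union_left, rfl⟩, ?_, ?_⟩
    · intro x hx
      simp only [Set.mem_iInter] at hx ⊢
      exact fun i hi => hx i (Finset.mem_union_left _ hi)
    · intro x hx
      simp only [Set.mem_iInter] at hx ⊢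
      exact fun i hi => hx i (Finset.mem_union_right _ hi)
  have hsub' : ⋂₀ 𝒦 ⊆ U := by
    intro x hx
    refine hsub (Set.mem_iInter.2 fun i => ?_)
    have := hx _ ⟨{i}, Finset.singleton_nonempty i, rfl⟩
    simpa using this
  obtain ⟨K, ⟨I0, _, rfl⟩, hKU⟩ := hwf 𝒦 hne hmem hdir U hU hsub'
  exact ⟨I0, hKU⟩
end

section
/- Let P be a poset and let Q be the poset of ω*(P)-closed sets (closed sets of the lower topology ω(P)) ordered by reverse inclusion. Then the map m : P × P → Q defined by m(x,y) = ↑x ∩ ↑y preserves suprema of directed sets, hence is Scott continuous. -/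
/-- The closed sets of the lower topology `ω(P)`. -/
def OmegaClosed (P : Type*) [Preorder P] : Set (Set P) :=
  {C : Set P | @IsClosed P (omegaTop P) C}

/-- `Q = (ω*(P), ⊇)`: the `ω(P)`-closed sets ordered by reverse inclusion. -/
def QC (P : Type*) [Preorder P] : Type _ := {C : Set P // C ∈ OmegaClosed P}

instance (P : Type*) [Preorder P] : PartialOrder (QC P) where
  le a b := b.1 ⊆ a.1
  le_refl a := subset_rfl
  le_trans a b c h1 h2 := fun x hx => h1 (h2 hx)
  le_antisymm a b h1 h2 := Subtype.ext (subset_antisymm h2 h1)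

lemma ici_omegaClosed {P : Type*} [Preorder P] (x : P) : Set.Ici x ∈ OmegaClosed P := by
  show @IsClosed P (omegaTop P) (Set.Ici x)
  letI := omegaTop P
  rw [← isOpen_compl_iff]
  exact TopologicalSpace.isOpen_generateFrom_of_mem ⟨x, rfl⟩

lemma ici_inter_omegaClosed {P : Type*} [Preorder P] (x y : P) :
    Set.Ici x ∩ Set.Ici y ∈ OmegaClosed P := by
  letI := omegaTop P
  exact IsClosed.inter (ici_omegaClosed x) (ici_omegaClosed y)

/-- The map `m : P × P → Q`, `m(x, y) = ↑x ∩ ↑y`. -/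
def mQ (P : Type*) [Preorder P] : P × P → QC P :=
  fun p => ⟨Set.Ici p.1 ∩ Set.Ici p.2, ici_inter_omegaClosed p.1 p.2⟩

/-- The map `m(x,y) = ↑x ∩ ↑y` from `P × P` to `Q = (ω*(P), ⊇)` preserves suprema of
directed sets, hence is Scott continuous. -/
theorem stmt17 (P : Type*) [PartialOrder P] :
    (∀ D : Set (P × P), D.Nonempty → DirectedOn (· ≤ ·) D →
      ∀ p : P × P, IsLUB D p → IsLUB (mQ P '' D) (mQ P p)) ∧
    @Continuous (P × P) (QC P) (scottTop (P × P)) (scottTop (QC P)) (mQ P) := by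
  have hmono : Monotone (mQ P) := by
    intro a b hab z hz
    exact ⟨le_trans hab.1 hz.1, le_trans hab.2 hz.2⟩
  have hlub : ∀ D : Set (P × P), ∀ p : P × P, IsLUB D p → IsLUB (mQ P '' D) (mQ P p) := by
    intro D p hp
    constructor
    · rintro _ ⟨d, hd, rfl⟩
      exact hmono (hp.1 hd)
    · intro b hb z hz
      have hub : (z, z) ∈ upperBounds D := by
        intro d hd
        have h := hb (Set.mem_image_of_mem _ hd) hz
        exact ⟨h.1, h.2⟩
      have h := hp.2 hub
      exact ⟨h.1, h.2⟩
  refine ⟨fun D _ _ p hp => hlub D p hp, ?_⟩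
  letI : TopologicalSpace (P × P) := scottTop (P × P)
  letI : TopologicalSpace (QC P) := scottTop (QC P)
  apply continuous_generateFrom_iff.mpr
  intro U hU
  apply TopologicalSpace.isOpen_generateFrom_of_mem
  constructor
  · intro a b hab ha
    exact hU.1 (hmono hab) ha
  · intro D hne hdir p hplub hpU
    have hdir' : DirectedOn (· ≤ ·) (mQ P '' D) := by
      rintro _ ⟨d1, hd1, rfl⟩ _ ⟨d2, hd2, rfl⟩
      obtain ⟨d3, hd3, h13, h23⟩ := hdir d1 hd1 d2 hd2
      exact ⟨mQ P d3, Set.mem_image_of_mem _ hd3, hmono h13, hmono h23⟩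
    obtain ⟨q, ⟨d, hd, rfl⟩, hqU⟩ :=
      hU.2 (mQ P '' D) (hne.image _) hdir' (mQ P p) (hlub D p hplub) hpU
    exact ⟨d, hd, hqU⟩
end
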